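/- Let U, V : ℝ^D → ℝ be measurable functions such that exp(−U) and exp(−V) are integrable with positive integrals, suppose ‖U − V‖_∞ is finite, and let P = exp(−U)/∫exp(−U) and Q = exp(−V)/∫exp(−V). Then the reverse Kullback–Leibler divergence also satisfies D_KL(Q‖P) ≤ 2‖U − V‖_∞. -/

import Mathlib

/-!
Normalizing constants cancel up to a constant: `log (Q / P) = (U - V) + (log Z_U - log Z_V)`.
The first term is bounded by `‖U - V‖_∞` pointwise, and so is the second, since
`exp (-U) ≤ exp ‖U - V‖_∞ * exp (-V)` gives `Z_U ≤ exp ‖U - V‖_∞ * Z_V` and symmetrically.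
Hence `|log (Q / P)| ≤ 2 ‖U - V‖_∞`, and integrating against the probability density `Q`
gives the bound.
-/

open MeasureTheory Real

section

variable {α : Type*} [MeasurableSpace α] {μ : Measure α}

theorem integral_mul_le_of_abs_le {Q h : α → ℝ} {C : ℝ} (hQ : Integrable Q μ)
    (hQ_nonneg : ∀ x, 0 ≤ Q x) (hQ_one : ∫ x, Q x ∂μ = 1)
    (hh : AEStronglyMeasurable h μ) (hC : ∀ x, |h x| ≤ C) :
    ∫ x, Q x * h x ∂μ ≤ C := by
  calc ∫ x, Q x * h x ∂μ ≤ ∫ x, C * Q x ∂μ := by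
        refine integral_mono (hQ.mul_bdd hh (.of_forall hC)) (hQ.const_mul C) fun x => ?_
        rw [mul_comm C]
        exact mul_le_mul_of_nonneg_left ((le_abs_self _).trans (hC x)) (hQ_nonneg x)
    _ = C := by rw [integral_const_mul, hQ_one, mul_one]

theorem log_integral_exp_neg_le {U V : α → ℝ} {M : ℝ}
    (hUi : Integrable (fun x => exp (-U x)) μ) (hVi : Integrable (fun x => exp (-V x)) μ)
    (hZU : 0 < ∫ x, exp (-U x) ∂μ) (hZV : 0 < ∫ x, exp (-V x) ∂μ)
    (hUV : ∀ x, V x - U x ≤ M) :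
    log (∫ x, exp (-U x) ∂μ) ≤ M + log (∫ x, exp (-V x) ∂μ) := by
  have hZ : ∫ x, exp (-U x) ∂μ ≤ exp M * ∫ x, exp (-V x) ∂μ := by
    rw [← integral_const_mul]
    refine integral_mono hUi (hVi.const_mul _) fun x => ?_
    rw [← exp_add, exp_le_exp]
    linarith [hUV x]
  calc log (∫ x, exp (-U x) ∂μ) ≤ log (exp M * ∫ x, exp (-V x) ∂μ) := log_le_log hZU hZ
    _ = M + log (∫ x, exp (-V x) ∂μ) := by rw [log_mul (exp_ne_zero _) hZV.ne', log_exp]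

theorem abs_log_integral_exp_neg_sub_le {U V : α → ℝ} {M : ℝ}
    (hUi : Integrable (fun x => exp (-U x)) μ) (hVi : Integrable (fun x => exp (-V x)) μ)
    (hZU : 0 < ∫ x, exp (-U x) ∂μ) (hZV : 0 < ∫ x, exp (-V x) ∂μ)
    (hUV : ∀ x, |U x - V x| ≤ M) :
    |log (∫ x, exp (-U x) ∂μ) - log (∫ x, exp (-V x) ∂μ)| ≤ M := by
  have hUV' : ∀ x, |V x - U x| ≤ M := fun x => abs_sub_comm (U x) (V x) ▸ hUV x
  have h₁ := log_integral_exp_neg_le hUi hVi hZU hZV fun x => (abs_le.mp (hUV' x)).2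
  have h₂ := log_integral_exp_neg_le hVi hUi hZV hZU fun x => (abs_le.mp (hUV x)).2
  exact abs_le.mpr ⟨by linarith, by linarith⟩

noncomputable def gibbsDensity (μ : Measure α) (U : α → ℝ) (x : α) : ℝ :=
  exp (-U x) / ∫ y, exp (-U y) ∂μ

theorem gibbsDensity_nonneg (U : α → ℝ) (x : α) : 0 ≤ gibbsDensity μ U x :=
  div_nonneg (exp_pos _).le (integral_nonneg fun _ => (exp_pos _).le)

theorem integrable_gibbsDensity {U : α → ℝ} (hUi : Integrable (fun x => exp (-U x)) μ) :
    Integrable (gibbsDensity μ U) μ :=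
  hUi.div_const _

theorem measurable_gibbsDensity {U : α → ℝ} (hU : Measurable U) :
    Measurable (gibbsDensity μ U) :=
  hU.neg.exp.div_const _

theorem integral_gibbsDensity {U : α → ℝ} (hZU : ∫ x, exp (-U x) ∂μ ≠ 0) :
    ∫ x, gibbsDensity μ U x ∂μ = 1 := by
  simp only [gibbsDensity, integral_div, div_self hZU]

theorem log_gibbsDensity_div_gibbsDensity {U V : α → ℝ} (hZU : ∫ x, exp (-U x) ∂μ ≠ 0)
    (hZV : ∫ x, exp (-V x) ∂μ ≠ 0) (x : α) :
    log (gibbsDensity μ V x / gibbsDensity μ U x) =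
      U x - V x + (log (∫ y, exp (-U y) ∂μ) - log (∫ y, exp (-V y) ∂μ)) := by
  rw [gibbsDensity, gibbsDensity,
    log_div (div_ne_zero (exp_ne_zero _) hZV) (div_ne_zero (exp_ne_zero _) hZU),
    log_div (exp_ne_zero _) hZV, log_div (exp_ne_zero _) hZU, log_exp, log_exp]
  ring

theorem abs_log_gibbsDensity_div_gibbsDensity_le {U V : α → ℝ} {M : ℝ}
    (hUi : Integrable (fun x => exp (-U x)) μ) (hVi : Integrable (fun x => exp (-V x)) μ)
    (hZU : 0 < ∫ x, exp (-U x) ∂μ) (hZV : 0 < ∫ x, exp (-V x) ∂μ)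
    (hUV : ∀ x, |U x - V x| ≤ M) (x : α) :
    |log (gibbsDensity μ V x / gibbsDensity μ U x)| ≤ 2 * M := by
  rw [log_gibbsDensity_div_gibbsDensity hZU.ne' hZV.ne', two_mul]
  exact (abs_add_le _ _).trans
    (add_le_add (hUV x) (abs_log_integral_exp_neg_sub_le hUi hVi hZU hZV hUV))

end

/-- The reverse Kullback–Leibler divergence between the Gibbs densities `P ∝ exp (-U)`
and `Q ∝ exp (-V)` also satisfies `D_KL(Q‖P) ≤ 2 * ‖U - V‖_∞`. -/
theorem reverse_kl_le_two_sup_norm (D : ℕ) (U V : (Fin D → ℝ) → ℝ)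
    (hU : Measurable U) (hV : Measurable V)
    (hUi : Integrable (fun q => exp (-U q)))
    (hVi : Integrable (fun q => exp (-V q)))
    (hIP : 0 < ∫ q, exp (-U q))
    (hIQ : 0 < ∫ q, exp (-V q))
    (hbdd : BddAbove (Set.range fun q => |U q - V q|))
    (P Q : (Fin D → ℝ) → ℝ)
    (hP : P = fun q => exp (-U q) / ∫ q', exp (-U q'))
    (hQ : Q = fun q => exp (-V q) / ∫ q', exp (-V q')) :
    ∫ q, Q q * log (Q q / P q) ≤ 2 * ⨆ q, |U q - V q| := by
  have hP' : P = gibbsDensity volume U := hP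
  have hQ' : Q = gibbsDensity volume V := hQ
  subst hP' hQ'
  have hlog_meas : Measurable fun q => log (gibbsDensity volume V q / gibbsDensity volume U q) :=
    ((measurable_gibbsDensity hV).div (measurable_gibbsDensity hU)).log
  exact integral_mul_le_of_abs_le (integrable_gibbsDensity hVi) (gibbsDensity_nonneg V)
    (integral_gibbsDensity hIQ.ne') hlog_meas.aestronglyMeasurable
    (abs_log_gibbsDensity_div_gibbsDensity_le hUi hVi hIP hIQ fun q => le_ciSup hbdd q)
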